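/- Let (I,μ) be a marked ideal of maximal order on a smooth variety X over a field of characteristic zero, meaning D^μ(I) = O_X, and let σ: X' → X be a blow-up at a smooth center C ⊆ supp(I,μ). Then the controlled transform σ^c(I,μ) := (y^{−μ}σ*(I), μ) is again of maximal order: D^μ(σ^c(I)) = O_{X'}. -/
import Mathlib


open MvPolynomial

/-- The first derivative ideal: generated by `I` and all first partial derivatives of
elements of `I`. -/
noncomputable def derivIdeal {K : Type*} [CommRing K] {n : ℕ}
    (I : Ideal (MvPolynomial (Fin n) K)) : Ideal (MvPolynomial (Fin n) K) :=
  I ⊔ Ideal.span {g | ∃ f ∈ I, ∃ i : Fin n, g = pderiv i f}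

/-- The `k`-th iterated derivative ideal. -/
noncomputable def derivIdealIter {K : Type*} [CommRing K] {n : ℕ} (k : ℕ)
    (I : Ideal (MvPolynomial (Fin n) K)) : Ideal (MvPolynomial (Fin n) K) :=
  derivIdeal^[k] I

/-- The standard chart of the blow-up of the coordinate subspace
`{u_1 = ... = u_m = 0}`: `u_i ↦ u'_i · y` for `i < m`, `u_m ↦ y`, `u_i ↦ u'_i` for
`i > m`, where `y = X m` is the exceptional coordinate. -/
noncomputable def blowChart (K : Type*) [CommSemiring K] {n : ℕ} (m : Fin n) :
    MvPolynomial (Fin n) K →ₐ[K] MvPolynomial (Fin n) K :=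
  aeval (fun i : Fin n => if i < m then X i * X m else X i)

/-- The controlled transform `σ^c(I) = y^{−μ}·σ*(I)` in the chart. -/
noncomputable def ctrans {K : Type*} [Field K] {n : ℕ} (m : Fin n) (μ : ℕ)
    (I : Ideal (MvPolynomial (Fin n) K)) : Ideal (MvPolynomial (Fin n) K) :=
  Ideal.span {g | ∃ f ∈ I, blowChart K m f = X m ^ μ * g}

/-- Chain rule for `aeval` into the same polynomial ring. -/
lemma pderiv_aeval_eq {K : Type*} [CommRing K] {n : ℕ} (φ : Fin n → MvPolynomial (Fin n) K)
    (j : Fin n) (f : MvPolynomial (Fin n) K) :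
    pderiv j (aeval φ f) = ∑ i, aeval φ (pderiv i f) * pderiv j (φ i) := by
  induction f using MvPolynomial.induction_on with
  | C a => simp
  | add p q hp hq =>
      simp only [map_add, hp, hq, ← Finset.sum_add_distrib, add_mul]
  | mul_X p k hp =>
      simp only [map_mul, aeval_X, pderiv_mul, hp, pderiv_X, map_add, Finset.sum_mul, add_mul,
        Finset.sum_add_distrib, Pi.single_apply, apply_ite (aeval φ), map_zero, mul_ite, ite_mul,
        mul_one, mul_zero, zero_mul, one_mul, Finset.sum_ite_eq, Finset.mem_univ, if_true]
      congr 1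
      exact Finset.sum_congr rfl fun i _ => by ring

lemma blow_pderiv_lt {K : Type*} [CommRing K] {n : ℕ} {m j : Fin n} (hj : j < m)
    (f : MvPolynomial (Fin n) K) :
    pderiv j (blowChart K m f) = blowChart K m (pderiv j f) * X m := by
  show pderiv j (aeval _ f) = _
  rw [pderiv_aeval_eq]
  rw [Finset.sum_eq_single j]
  · simp [blowChart, hj, pderiv_mul, pderiv_X, Pi.single_eq_of_ne hj.ne']
  · intro i _ hij
    by_cases him : i < m
    · simp [him, pderiv_mul, pderiv_X, Pi.single_apply, hij, hj.ne']
    · simp [him, pderiv_X, Pi.single_apply, hij]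
  · simp

lemma blow_pderiv_gt {K : Type*} [CommRing K] {n : ℕ} {m j : Fin n} (hj : m < j)
    (f : MvPolynomial (Fin n) K) :
    pderiv j (blowChart K m f) = blowChart K m (pderiv j f) := by
  show pderiv j (aeval _ f) = _
  rw [pderiv_aeval_eq]
  rw [Finset.sum_eq_single j]
  · simp [blowChart, not_lt.2 hj.le, pderiv_X]
  · intro i _ hij
    by_cases him : i < m
    · simp [him, pderiv_mul, pderiv_X, Pi.single_apply, hij, hj.ne]
    · simp [him, pderiv_X, Pi.single_apply, hij]
  · simp

lemma blow_pderiv_m {K : Type*} [CommRing K] {n : ℕ} (m : Fin n)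
    (f : MvPolynomial (Fin n) K) :
    pderiv m (blowChart K m f) =
      blowChart K m (pderiv m f)
        + ∑ i, (if i < m then blowChart K m (pderiv i f) * X i else 0) := by
  show pderiv m (aeval _ f) = _
  rw [pderiv_aeval_eq]
  have key : ∀ i : Fin n,
      aeval (fun i : Fin n => if i < m then X i * X m else X i) (pderiv i f) *
        pderiv m (if i < m then X i * X m else (X i : MvPolynomial (Fin n) K)) =
      (if i = m then blowChart K m (pderiv m f) else 0)
        + (if i < m then blowChart K m (pderiv i f) * X i else 0) := by
    intro i
    rcases lt_trichotomy i m with h | h | h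
    · simp [blowChart, h, h.ne, pderiv_mul, pderiv_X, Pi.single_eq_of_ne h.ne', pderiv_X_self]
    · subst h; simp [blowChart, lt_irrefl, pderiv_X_self]
    · simp [blowChart, h.ne', not_lt.2 h.le, pderiv_X, Pi.single_eq_of_ne h.ne]
  rw [Finset.sum_congr rfl fun i _ => key i, Finset.sum_add_distrib]
  simp

lemma le_derivIdeal {K : Type*} [CommRing K] {n : ℕ} (J : Ideal (MvPolynomial (Fin n) K)) :
    J ≤ derivIdeal J := le_sup_left

lemma pderiv_mem_derivIdeal {K : Type*} [CommRing K] {n : ℕ}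
    {J : Ideal (MvPolynomial (Fin n) K)} {G : MvPolynomial (Fin n) K}
    (hG : G ∈ J) (i : Fin n) : pderiv i G ∈ derivIdeal J :=
  Ideal.mem_sup_right (Ideal.subset_span ⟨G, hG, i, rfl⟩)

/-- Auxiliary ideal: polynomials whose chart transform is divisible by `X m ^ k`
with quotient in `J`. -/
noncomputable def Sideal {K : Type*} [CommRing K] {n : ℕ} (m : Fin n) (k : ℕ)
    (J : Ideal (MvPolynomial (Fin n) K)) : Ideal (MvPolynomial (Fin n) K) where
  carrier := {f | ∃ G ∈ J, blowChart K m f = X m ^ k * G}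
  add_mem' := by
    rintro a b ⟨G, hG, ha⟩ ⟨H, hH, hb⟩
    exact ⟨G + H, J.add_mem hG hH, by rw [map_add, ha, hb, mul_add]⟩
  zero_mem' := ⟨0, J.zero_mem, by simp⟩
  smul_mem' := by
    rintro c a ⟨G, hG, h⟩
    refine ⟨blowChart K m c * G, J.mul_mem_left _ hG, ?_⟩
    rw [smul_eq_mul, map_mul, h]; ring

lemma step_lemma {K : Type*} [Field K] {n : ℕ} (m : Fin n) (k : ℕ)
    (J : Ideal (MvPolynomial (Fin n) K)) {f G : MvPolynomial (Fin n) K} (hG : G ∈ J)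
    (hf : blowChart K m f = X m ^ (k + 1) * G) (j : Fin n) :
    pderiv j f ∈ Sideal m k (derivIdeal J) := by
  have hXne : (X m : MvPolynomial (Fin n) K) ≠ 0 := X_ne_zero m
  have hlt : ∀ i < m, blowChart K m (pderiv i f) = X m ^ k * pderiv i G := by
    intro i hi
    refine mul_right_cancel₀ hXne ?_
    rw [← blow_pderiv_lt hi, hf, pderiv_mul]
    have h0 : pderiv i (X m ^ (k + 1) : MvPolynomial (Fin n) K) = 0 := by
      rw [pderiv_pow]
      simp [pderiv_X, Pi.single_apply, hi.ne']
    rw [h0, pow_succ]; ring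
  rcases lt_trichotomy j m with hj | hj | hj
  · exact ⟨pderiv j G, pderiv_mem_derivIdeal hG j, hlt j hj⟩
  · subst hj
    refine ⟨((k : MvPolynomial (Fin n) K) + 1) * G + X j * pderiv j G
        - ∑ i, (if i < j then pderiv i G * X i else 0), ?_, ?_⟩
    · refine Ideal.sub_mem _ (Ideal.add_mem _
        (Ideal.mul_mem_left _ _ (le_derivIdeal _ hG))
        (Ideal.mul_mem_left _ _ (pderiv_mem_derivIdeal hG j)))
        (Ideal.sum_mem _ fun i _ => ?_)
      split_ifs
      · exact Ideal.mul_mem_right _ _ (pderiv_mem_derivIdeal hG i)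
      · exact Ideal.zero_mem _
    · have e1 : blowChart K j (pderiv j f) = pderiv j (blowChart K j f)
          - ∑ i, (if i < j then blowChart K j (pderiv i f) * X i else 0) := by
        rw [blow_pderiv_m]; ring
      have e2 : ∑ i, (if i < j then blowChart K j (pderiv i f) * X i else 0)
          = X j ^ k * ∑ i, (if i < j then pderiv i G * X i else 0) := by
        rw [Finset.mul_sum]
        refine Finset.sum_congr rfl fun i _ => ?_
        split_ifs with h
        · rw [hlt i h]; ring
        · ring
      rw [e1, e2, hf, pderiv_mul, pderiv_pow, pderiv_X_self]
      simp only [Nat.add_sub_cancel]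
      push_cast
      ring
  · refine ⟨X m * pderiv j G, Ideal.mul_mem_left _ _ (pderiv_mem_derivIdeal hG j), ?_⟩
    rw [← blow_pderiv_gt hj, hf, pderiv_mul]
    have h0 : pderiv j (X m ^ (k + 1) : MvPolynomial (Fin n) K) = 0 := by
      rw [pderiv_pow]
      simp [pderiv_X, Pi.single_apply, hj.ne]
    rw [h0, pow_succ]; ring

/-- If `(I,μ)` is of maximal order (`D^μ(I) = (1)`) and the smooth center
`C = {u_1 = ... = u_m = 0}` is contained in `supp(I,μ)` (so `I ⊆ I_C^μ`), then the
controlled transform `σ^c(I,μ)` is again of maximal order: `D^μ(σ^c(I)) = (1)`. -/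
theorem stmt_16 {K : Type*} [Field K] [CharZero K] {n : ℕ} (m : Fin n) (μ : ℕ)
    (I : Ideal (MvPolynomial (Fin n) K))
    (hmax : derivIdealIter μ I = ⊤)
    (hC : I ≤ Ideal.span {g | ∃ i ≤ m, g = X i} ^ μ) :
    derivIdealIter μ (ctrans m μ I) = ⊤ := by
  have itr : ∀ (r : ℕ) (J : Ideal (MvPolynomial (Fin n) K)),
      derivIdealIter (r + 1) J = derivIdeal (derivIdealIter r J) := fun r J =>
    Function.iterate_succ_apply' derivIdeal r J
  have main : ∀ r : ℕ, r ≤ μ →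
      derivIdealIter r I ≤ Sideal m (μ - r) (derivIdealIter r (ctrans m μ I)) := by
    intro r
    induction r with
    | zero =>
        intro _ f hf
        have hdvd : X m ^ μ ∣ blowChart K m f := by
          have h1 : blowChart K m f ∈
              Ideal.map (blowChart K m) (Ideal.span {g | ∃ i ≤ m, g = X i} ^ μ) :=
            Ideal.mem_map_of_mem _ (hC hf)
          have h2 : Ideal.map (blowChart K m) (Ideal.span {g | ∃ i ≤ m, g = X i}) ≤
              Ideal.span {(X m : MvPolynomial (Fin n) K)} := by
            rw [Ideal.map_span, Ideal.span_le]
            rintro g ⟨h, ⟨i, him, rfl⟩, rfl⟩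
            simp only [SetLike.mem_coe, Ideal.mem_span_singleton]
            rw [show (blowChart K m) (X i) = if i < m then X i * X m else X i
              from aeval_X _ i]
            rcases lt_or_eq_of_le him with h | h
            · simp [h]
            · simp [h, lt_irrefl]
          rw [Ideal.map_pow] at h1
          have h3 := Ideal.pow_right_mono h2 μ h1
          rwa [Ideal.span_singleton_pow, Ideal.mem_span_singleton] at h3
        obtain ⟨G, hGf⟩ := hdvd
        exact ⟨G, Ideal.subset_span ⟨f, hf, hGf⟩, by simpa using hGf⟩
    | succ r ih =>
        intro hr
        have hr' : r ≤ μ := Nat.le_of_succ_le hr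
        have hexp : μ - r = (μ - (r + 1)) + 1 := by omega
        have ih' := ih hr'
        rw [itr, itr]
        refine sup_le ?_ ?_
        · intro f hf
          obtain ⟨G, hG, hGf⟩ := ih' hf
          refine ⟨X m * G, Ideal.mul_mem_left _ _ (le_derivIdeal _ hG), ?_⟩
          rw [hGf, hexp, pow_succ]; ring
        · rw [Ideal.span_le]
          rintro g ⟨f, hf, j, rfl⟩
          obtain ⟨G, hG, hGf⟩ := ih' hf
          rw [hexp] at hGf
          exact step_lemma m _ _ hG hGf j
  have h1 : (1 : MvPolynomial (Fin n) K) ∈ derivIdealIter μ I := hmax ▸ Submodule.mem_top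
  obtain ⟨G, hG, hGf⟩ := main μ le_rfl h1
  rw [Ideal.eq_top_iff_one]
  have hG1 : G = 1 := by simpa using hGf.symm
  rwa [hG1] at hG
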